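/- Let t_n denote the number of independent dominating sets of the chain triangular cactus T_n for n ≥ 1, and set t_0 = 1 (the one-vertex graph T_0 has exactly one maximal independent set). Then, in the ring of formal power series over ℚ, (1 - X - X²) · (∑_{n≥0} t_n Xⁿ) = 1 + 2X + X². -/

import Mathlib

/-- `S` is an independent dominating set of `G`: pairwise non-adjacent, and every
vertex outside `S` has a neighbour in `S`. -/
def IsIndepDomSet {V : Type*} (G : SimpleGraph V) (S : Finset V) : Prop :=
  (∀ v ∈ S, ∀ w ∈ S, ¬ G.Adj v w) ∧ ∀ v, v ∉ S → ∃ w ∈ S, G.Adj v w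

/-- The chain triangular cactus `T n`: vertices `Sum.inl i` are `x i`
(`0 ≤ i ≤ n`) and `Sum.inr k` is `y (k+1)` (`0 ≤ k ≤ n-1`); the `i`-th triangle
(`1 ≤ i ≤ n`) has vertices `x (i-1)`, `x i`, `y i`. -/
def triChain (n : ℕ) : SimpleGraph (Fin (n + 1) ⊕ Fin n) :=
  SimpleGraph.fromRel fun p q =>
    match p, q with
    | Sum.inl i, Sum.inl j => (i : ℕ) + 1 = (j : ℕ)
    | Sum.inl i, Sum.inr k => (i : ℕ) = (k : ℕ) ∨ (i : ℕ) = (k : ℕ) + 1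
    | _, _ => False

/-- The number of independent dominating sets of the chain triangular cactus `T n`. -/
noncomputable def numIDSTri (n : ℕ) : ℕ :=
  Nat.card {S : Finset (Fin (n + 1) ⊕ Fin n) // IsIndepDomSet (triChain n) S}

/-!
For `n ≥ 1` every vertex of `T n` lies in a triangle, and an independent dominating set meets each
triangle in exactly one vertex. So it is determined by its trace on the path `x_0, …, x_n`, which
can be any independent set of that path (`y_i` is taken exactly when neither `x_{i-1}` nor `x_i`
is). Independent sets of a path on `m` vertices, read as `Bool`-words without two adjacent `true`s,
obey the Fibonacci recursion (split on the first letter). Hence `t n = F (n + 3)` for `n ≥ 1`,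
while `t 0 = 1`, and `1 - X - X²` kills the series except in degrees `0, 1, 2`.
-/

def NoAdjacentTrue {m : ℕ} (b : Fin m → Bool) : Prop :=
  ∀ i j : Fin m, (i : ℕ) + 1 = j → ¬(b i = true ∧ b j = true)

theorem noAdjacentTrue_cons_iff {m : ℕ} (a : Bool) (t : Fin m → Bool) :
    NoAdjacentTrue (Fin.cons a t : Fin (m + 1) → Bool) ↔
      (∀ j : Fin m, (j : ℕ) = 0 → ¬(a = true ∧ t j = true)) ∧ NoAdjacentTrue t := by
  constructor
  · intro h
    refine ⟨fun j hj => by simpa using h 0 j.succ (by simp [hj]), fun i j hij => ?_⟩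
    simpa using h i.succ j.succ (by simp [hij])
  · rintro ⟨h0, ht⟩ i j hij
    cases j using Fin.cases with
    | zero => simp at hij
    | succ j =>
      cases i using Fin.cases with
      | zero => simpa using h0 j (by simpa using hij.symm)
      | succ i => simpa using ht i j (by simpa using hij)

theorem Nat.card_subtype_fin_succ {α : Type*} [Fintype α] {m : ℕ}
    (p : (Fin (m + 1) → α) → Prop) :
    Nat.card {b // p b} = ∑ a, Nat.card {t : Fin m → α // p (Fin.cons a t)} := by
  rw [← Nat.card_sigma]
  exact Nat.card_congr (((Fin.consEquiv fun _ => α).symm.subtypeEquiv (by simp)).trans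
    (Equiv.subtypeProdEquivSigmaSubtype fun a t => p (Fin.cons a t)))

theorem card_noAdjacentTrue_add_two (m : ℕ) :
    Nat.card {b : Fin (m + 2) → Bool // NoAdjacentTrue b} =
      Nat.card {b : Fin (m + 1) → Bool // NoAdjacentTrue b} +
        Nat.card {b : Fin m → Bool // NoAdjacentTrue b} := by
  rw [Nat.card_subtype_fin_succ, Fintype.sum_bool, Nat.card_subtype_fin_succ, Fintype.sum_bool]
  simp [noAdjacentTrue_cons_iff, add_comm]

theorem card_noAdjacentTrue :
    ∀ m : ℕ, Nat.card {b : Fin m → Bool // NoAdjacentTrue b} = Nat.fib (m + 2)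
  | 0 => by simp [NoAdjacentTrue]
  | 1 => by simp [NoAdjacentTrue]; rfl
  | m + 2 => by
    rw [card_noAdjacentTrue_add_two, card_noAdjacentTrue (m + 1), card_noAdjacentTrue m,
      Nat.fib_add_two (n := m + 2), add_comm]

namespace triChain

variable {n : ℕ}

@[simp]
theorem adj_inl_inl (i j : Fin (n + 1)) :
    (triChain n).Adj (.inl i) (.inl j) ↔ (i : ℕ) + 1 = j ∨ (j : ℕ) + 1 = i := by
  simp only [triChain, SimpleGraph.fromRel_adj, ne_eq, Sum.inl.injEq, Fin.ext_iff]
  omega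

@[simp]
theorem adj_inl_inr (i : Fin (n + 1)) (k : Fin n) :
    (triChain n).Adj (.inl i) (.inr k) ↔ (i : ℕ) = k ∨ (i : ℕ) = k + 1 := by
  simp [triChain]

@[simp]
theorem adj_inr_inl (k : Fin n) (i : Fin (n + 1)) :
    (triChain n).Adj (.inr k) (.inl i) ↔ (i : ℕ) = k ∨ (i : ℕ) = k + 1 :=
  SimpleGraph.adj_comm _ _ _ |>.trans (adj_inl_inr i k)

@[simp]
theorem not_adj_inr_inr (k l : Fin n) : ¬(triChain n).Adj (.inr k) (.inr l) := by
  simp [triChain]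

theorem exists_castSucc_or_succ (hn : n ≠ 0) (j : Fin (n + 1)) :
    ∃ k : Fin n, j = k.castSucc ∨ j = k.succ := by
  obtain ⟨n, rfl⟩ := Nat.exists_eq_succ_of_ne_zero hn
  cases j using Fin.lastCases with
  | last => exact ⟨Fin.last n, .inr (Fin.succ_last n).symm⟩
  | cast k => exact ⟨k, .inl rfl⟩

theorem isIndepDomSet_of_forall (hn : n ≠ 0) {S : Finset (Fin (n + 1) ⊕ Fin n)}
    (hx : ∀ i j : Fin (n + 1), (i : ℕ) + 1 = j → ¬(.inl i ∈ S ∧ .inl j ∈ S))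
    (hy : ∀ k : Fin n, .inr k ∈ S ↔ .inl k.castSucc ∉ S ∧ .inl k.succ ∉ S) :
    IsIndepDomSet (triChain n) S := by
  have hxy (i : Fin (n + 1)) (k : Fin n) (hi : .inl i ∈ S) (hk : .inr k ∈ S) :
      ¬(triChain n).Adj (.inl i) (.inr k) := by
    rw [adj_inl_inr]
    rintro (h | h)
    · exact ((hy k).1 hk).1 (by rwa [show k.castSucc = i from Fin.ext h.symm])
    · exact ((hy k).1 hk).2 (by rwa [show k.succ = i from Fin.ext (by simp [h])])
  have hcover (k : Fin n) (hk : .inr k ∉ S) : .inl k.castSucc ∈ S ∨ .inl k.succ ∈ S := by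
    have := hy k
    tauto
  refine ⟨?_, ?_⟩
  · rintro (i | k) hv (j | l) hw hadj
    · rcases (adj_inl_inl i j).1 hadj with h | h
      exacts [hx i j h ⟨hv, hw⟩, hx j i h ⟨hw, hv⟩]
    · exact hxy i l hv hw hadj
    · exact hxy j k hw hv hadj.symm
    · exact not_adj_inr_inr _ _ hadj
  · rintro (j | k) hv
    · obtain ⟨k, rfl | rfl⟩ := exists_castSucc_or_succ hn j <;> by_cases hk : .inr k ∈ S
      · exact ⟨_, hk, by simp⟩
      · exact ⟨_, (hcover k hk).resolve_left hv, by simp⟩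
      · exact ⟨_, hk, by simp⟩
      · exact ⟨_, (hcover k hk).resolve_right hv, by simp⟩
    · rcases hcover k hv with h | h
      exacts [⟨_, h, by simp⟩, ⟨_, h, by simp⟩]

theorem isIndepDomSet_iff (hn : n ≠ 0) (S : Finset (Fin (n + 1) ⊕ Fin n)) :
    IsIndepDomSet (triChain n) S ↔
      (∀ i j : Fin (n + 1), (i : ℕ) + 1 = j → ¬(.inl i ∈ S ∧ .inl j ∈ S)) ∧
        ∀ k : Fin n, .inr k ∈ S ↔ .inl k.castSucc ∉ S ∧ .inl k.succ ∉ S := by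
  refine ⟨fun ⟨hind, hdom⟩ => ?_, fun ⟨hx, hy⟩ => isIndepDomSet_of_forall hn hx hy⟩
  refine ⟨fun i j hij ⟨hi, hj⟩ => hind _ hi _ hj (by simp [hij]),
    fun k => ⟨fun hk => ?_, ?_⟩⟩
  · exact ⟨fun h => hind _ h _ hk (by simp), fun h => hind _ h _ hk (by simp)⟩
  · rintro ⟨hl, hr⟩
    by_contra hk
    obtain ⟨w | w, hw, hadj⟩ := hdom _ hk
    · rcases (adj_inr_inl k w).1 hadj with h | h
      · exact hl (by rwa [show k.castSucc = w from Fin.ext h.symm])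
      · exact hr (by rwa [show k.succ = w from Fin.ext (by simp [h])])
    · exact not_adj_inr_inr _ _ hadj

def ofXPattern (b : Fin (n + 1) → Bool) : Finset (Fin (n + 1) ⊕ Fin n) :=
  (Finset.univ.filter fun j => b j = true).disjSum
    (Finset.univ.filter fun k => b k.castSucc = false ∧ b k.succ = false)

@[simp]
theorem inl_mem_ofXPattern (b : Fin (n + 1) → Bool) (j : Fin (n + 1)) :
    .inl j ∈ ofXPattern b ↔ b j = true := by
  simp [ofXPattern]

@[simp]
theorem inr_mem_ofXPattern (b : Fin (n + 1) → Bool) (k : Fin n) :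
    .inr k ∈ ofXPattern b ↔ b k.castSucc = false ∧ b k.succ = false := by
  simp [ofXPattern]

def isIndepDomSetEquiv (hn : n ≠ 0) :
    {S // IsIndepDomSet (triChain n) S} ≃ {b : Fin (n + 1) → Bool // NoAdjacentTrue b} where
  toFun S := ⟨fun j => decide (.inl j ∈ S.1), by
    simpa [NoAdjacentTrue] using ((isIndepDomSet_iff hn S.1).1 S.2).1⟩
  invFun b := ⟨ofXPattern b.1,
    (isIndepDomSet_iff hn _).2 ⟨by simpa [NoAdjacentTrue] using b.2, by simp⟩⟩
  left_inv S := by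
    ext (j | k)
    · simp
    · simp [((isIndepDomSet_iff hn S.1).1 S.2).2 k]
  right_inv b := by
    ext j
    simp

end triChain

theorem numIDSTri_zero : numIDSTri 0 = 1 := by
  have hadj (v w : Fin 1 ⊕ Fin 0) : ¬(triChain 0).Adj v w := by
    rcases v with i | ⟨_, ⟨⟩⟩
    rcases w with j | ⟨_, ⟨⟩⟩
    simp [Fin.val_eq_zero]
  have hS (S : Finset (Fin 1 ⊕ Fin 0)) : IsIndepDomSet (triChain 0) S ↔ S = {.inl 0} := by
    simp [IsIndepDomSet, hadj, Finset.eq_singleton_iff_unique_mem, Fin.forall_fin_one]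
  rw [numIDSTri, Nat.card_congr (Equiv.subtypeEquivRight hS), Nat.card_unique]

theorem numIDSTri_eq_fib {n : ℕ} (hn : n ≠ 0) : numIDSTri n = Nat.fib (n + 3) :=
  (Nat.card_congr (triChain.isIndepDomSetEquiv hn)).trans (card_noAdjacentTrue (n + 1))

open PowerSeries in
theorem one_sub_X_sub_X_sq_mul_mk {R : Type*} [CommRing R] (t : ℕ → R)
    (ht : ∀ n, t (n + 3) = t (n + 2) + t (n + 1)) :
    (1 - X - X ^ 2) * mk t = C (t 0) + C (t 1 - t 0) * X + C (t 2 - t 1 - t 0) * X ^ 2 := by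
  ext (_ | _ | _ | n) <;> simp [sub_mul, coeff_X_pow_mul', coeff_X_pow, ht]

theorem numIDSTri_generating_function :
    (1 - PowerSeries.X - PowerSeries.X ^ 2) *
        PowerSeries.mk (fun n : ℕ => (numIDSTri n : ℚ)) =
      1 + 2 * PowerSeries.X + PowerSeries.X ^ 2 := by
  have hrec (n : ℕ) : (numIDSTri (n + 3) : ℚ) = numIDSTri (n + 2) + numIDSTri (n + 1) := by
    rw [numIDSTri_eq_fib (by omega), numIDSTri_eq_fib (by omega), numIDSTri_eq_fib (by omega),
      Nat.fib_add_two (n := n + 4), Nat.cast_add, add_comm]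
  rw [one_sub_X_sub_X_sq_mul_mk _ hrec, numIDSTri_zero, numIDSTri_eq_fib one_ne_zero,
    numIDSTri_eq_fib two_ne_zero]
  norm_num [Nat.fib_add_two, map_ofNat]
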